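/- There exist a constant ν₀ ∈ (0,1) and a constant C > 0, depending only on γ, ρ_+, u_+, θ_+, such that for all ν ∈ (0, ν₀]: sup_{ξ ∈ ℝ} |ρ^{r₃}_ν(ξ) − ρ^{r₃}(ξ)| ≤ C ν, sup_{ξ ∈ ℝ} |m^{r₃}_ν(ξ) − m^{r₃}(ξ)| ≤ C ν, and sup_{ξ ∈ ℝ} |n^{r₃}_ν(ξ) − n^{r₃}(ξ)| ≤ C ν. -/

import Mathlib

/-!
For `ξ ≥ λ₋` the cut-off wave coincides with the rarefaction wave, so only `ξ < λ₋` matters.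
There `λ₋` is exactly the point where the fan density reaches `ν`, so both densities lie in
`[0, ν]`; the velocities stay between `u₋` and `u₊` because the fan velocity is affine and
`u_ν ≤ u₊`; and both energies `e^{S₊} ρ^γ` are at most `e^{S₊} ν^γ ≤ e^{S₊} ν`.
-/

noncomputable section

/-- S₊ = log θ₊ − (γ−1) log ρ₊ -/
def Splus (γ ρp θp : ℝ) : ℝ := Real.log θp - (γ - 1) * Real.log ρp

/-- k = √(γ(γ−1) e^{S₊}) -/
def kconst (γ ρp θp : ℝ) : ℝ := Real.sqrt (γ * (γ - 1) * Real.exp (Splus γ ρp θp))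

/-- u₋ = u₊ − (2/(γ−1)) k ρ₊^{(γ−1)/2} -/
def uminus (γ ρp θp up : ℝ) : ℝ :=
  up - 2 / (γ - 1) * kconst γ ρp θp * ρp ^ ((γ - 1) / 2)

/-- λ₊ = u₊ + k ρ₊^{(γ−1)/2} -/
def lamPlus (γ ρp θp up : ℝ) : ℝ := up + kconst γ ρp θp * ρp ^ ((γ - 1) / 2)

/-- the density ρ^{r₃} of the 3-rarefaction wave with left vacuum state -/
def rho3 (γ ρp θp up : ℝ) (ξ : ℝ) : ℝ :=
  if ξ < uminus γ ρp θp up then 0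
  else if ξ ≤ lamPlus γ ρp θp up then
    ((γ - 1) * (ξ - uminus γ ρp θp up) / ((γ + 1) * kconst γ ρp θp)) ^ (2 / (γ - 1))
  else ρp

/-- the velocity u^{r₃} of the 3-rarefaction wave -/
def u3 (γ ρp θp up : ℝ) (ξ : ℝ) : ℝ :=
  if ξ ≤ lamPlus γ ρp θp up then
    uminus γ ρp θp up + 2 * (ξ - uminus γ ρp θp up) / (γ + 1)
  else up

/-- the temperature θ^{r₃} of the 3-rarefaction wave -/
def theta3 (γ ρp θp up : ℝ) (ξ : ℝ) : ℝ :=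
  Real.exp (Splus γ ρp θp) * rho3 γ ρp θp up ξ ^ (γ - 1)

/-- the momentum m^{r₃} = ρ^{r₃} u^{r₃} (equal to 0 in the vacuum region) -/
def m3 (γ ρp θp up : ℝ) (ξ : ℝ) : ℝ := rho3 γ ρp θp up ξ * u3 γ ρp θp up ξ

/-- the total internal energy n^{r₃} = ρ^{r₃} θ^{r₃} (0 in the vacuum region) -/
def n3 (γ ρp θp up : ℝ) (ξ : ℝ) : ℝ := rho3 γ ρp θp up ξ * theta3 γ ρp θp up ξ

/-- u_ν = u₋ + (2/(γ−1)) k ν^{(γ−1)/2} -/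
def unu (γ ρp θp up ν : ℝ) : ℝ :=
  uminus γ ρp θp up + 2 / (γ - 1) * kconst γ ρp θp * ν ^ ((γ - 1) / 2)

/-- λ₋ = u_ν + k ν^{(γ−1)/2} -/
def lamMinus (γ ρp θp up ν : ℝ) : ℝ :=
  unu γ ρp θp up ν + kconst γ ρp θp * ν ^ ((γ - 1) / 2)

/-- the density of the cut-off 3-rarefaction wave -/
def rho3nu (γ ρp θp up ν : ℝ) (ξ : ℝ) : ℝ :=
  if ξ < lamMinus γ ρp θp up ν then ν
  else if ξ ≤ lamPlus γ ρp θp up then rho3 γ ρp θp up ξ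
  else ρp

/-- the velocity of the cut-off 3-rarefaction wave -/
def u3nu (γ ρp θp up ν : ℝ) (ξ : ℝ) : ℝ :=
  if ξ < lamMinus γ ρp θp up ν then unu γ ρp θp up ν
  else if ξ ≤ lamPlus γ ρp θp up then u3 γ ρp θp up ξ
  else up

/-- the temperature of the cut-off 3-rarefaction wave -/
def theta3nu (γ ρp θp up ν : ℝ) (ξ : ℝ) : ℝ :=
  Real.exp (Splus γ ρp θp) * rho3nu γ ρp θp up ν ξ ^ (γ - 1)

/-- the momentum of the cut-off 3-rarefaction wave -/
def m3nu (γ ρp θp up ν : ℝ) (ξ : ℝ) : ℝ :=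
  rho3nu γ ρp θp up ν ξ * u3nu γ ρp θp up ν ξ

/-- the total internal energy of the cut-off 3-rarefaction wave -/
def n3nu (γ ρp θp up ν : ℝ) (ξ : ℝ) : ℝ :=
  rho3nu γ ρp θp up ν ξ * theta3nu γ ρp θp up ν ξ

section CutoffRarefaction

variable {γ ρp θp up ν ξ : ℝ}

lemma kconst_pos (hγ : 1 < γ) : 0 < kconst γ ρp θp :=
  Real.sqrt_pos.mpr (by have := Real.exp_pos (Splus γ ρp θp); positivity)

lemma lamMinus_zero (hγ : 1 < γ) : lamMinus γ ρp θp up 0 = uminus γ ρp θp up := by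
  simp [lamMinus, unu, Real.zero_rpow (by linarith : (γ - 1) / 2 ≠ 0)]

lemma lamMinus_self : lamMinus γ ρp θp up ρp = lamPlus γ ρp θp up := by
  unfold lamMinus unu lamPlus uminus
  ring

lemma lamMinus_strictMonoOn (hγ : 1 < γ) : StrictMonoOn (lamMinus γ ρp θp up) (Set.Ici 0) := by
  intro a ha b _ hab
  have hpow : a ^ ((γ - 1) / 2) < b ^ ((γ - 1) / 2) :=
    Real.rpow_lt_rpow ha hab (by linarith)
  have hc : 0 < (2 / (γ - 1) + 1) * kconst γ ρp θp := by
    have := kconst_pos (ρp := ρp) (θp := θp) hγ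
    have : 0 < γ - 1 := by linarith
    positivity
  have hmul := mul_lt_mul_of_pos_left hpow hc
  simp only [lamMinus, unu]
  linarith

lemma uminus_lt_lamMinus (hγ : 1 < γ) (hν : 0 < ν) :
    uminus γ ρp θp up < lamMinus γ ρp θp up ν := by
  rw [← lamMinus_zero hγ]
  exact lamMinus_strictMonoOn hγ (Set.mem_Ici.mpr le_rfl) hν.le hν

lemma lamMinus_le_lamPlus (hγ : 1 < γ) (hν : 0 ≤ ν) (hνρ : ν ≤ ρp) :
    lamMinus γ ρp θp up ν ≤ lamPlus γ ρp θp up := by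
  rw [← lamMinus_self]
  exact (lamMinus_strictMonoOn hγ).monotoneOn hν (hν.trans hνρ) hνρ

/-- The cut-off point `λ₋` is where the fan density `ρ^{r₃}` reaches the value `ν`. -/
lemma fan_base_lamMinus (hγ : 1 < γ) :
    (γ - 1) * (lamMinus γ ρp θp up ν - uminus γ ρp θp up) / ((γ + 1) * kconst γ ρp θp)
      = ν ^ ((γ - 1) / 2) := by
  have := kconst_pos (ρp := ρp) (θp := θp) hγ
  have : γ - 1 ≠ 0 := by linarith
  have : γ + 1 ≠ 0 := by linarith
  unfold lamMinus unu
  field_simp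
  ring

lemma rho3_mem_Icc_of_lt_lamMinus (hγ : 1 < γ) (hν : 0 < ν) (hνρ : ν ≤ ρp)
    (hξ : ξ < lamMinus γ ρp θp up ν) : rho3 γ ρp θp up ξ ∈ Set.Icc 0 ν := by
  unfold rho3
  split_ifs with hvac hfan
  · exact ⟨le_rfl, hν.le⟩
  · have hk := kconst_pos (ρp := ρp) (θp := θp) hγ
    have hden : 0 < (γ + 1) * kconst γ ρp θp := by positivity
    have hbase : 0 ≤ (γ - 1) * (ξ - uminus γ ρp θp up) / ((γ + 1) * kconst γ ρp θp) :=
      div_nonneg (mul_nonneg (by linarith) (by linarith)) hden.le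
    have hbase_le : (γ - 1) * (ξ - uminus γ ρp θp up) / ((γ + 1) * kconst γ ρp θp)
        ≤ ν ^ ((γ - 1) / 2) := by
      rw [← fan_base_lamMinus hγ]
      gcongr
    refine ⟨Real.rpow_nonneg hbase _, ?_⟩
    calc _ ≤ (ν ^ ((γ - 1) / 2)) ^ (2 / (γ - 1)) :=
          Real.rpow_le_rpow hbase hbase_le (div_nonneg zero_le_two (by linarith))
      _ = ν := by
          rw [← Real.rpow_mul hν.le, div_mul_div_cancel₀' (by linarith : γ - 1 ≠ 0),
            div_self two_ne_zero, Real.rpow_one]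
  · exact absurd (hξ.le.trans (lamMinus_le_lamPlus hγ hν.le hνρ)) hfan

lemma unu_mem_Icc (hγ : 1 < γ) (hν : 0 ≤ ν) (hνρ : ν ≤ ρp) :
    unu γ ρp θp up ν ∈ Set.Icc (uminus γ ρp θp up) up := by
  have hc : 0 ≤ 2 / (γ - 1) * kconst γ ρp θp :=
    mul_nonneg (div_nonneg zero_le_two (by linarith)) (kconst_pos hγ).le
  have hpow : ν ^ ((γ - 1) / 2) ≤ ρp ^ ((γ - 1) / 2) :=
    Real.rpow_le_rpow hν hνρ (by linarith)
  have key := mul_le_mul_of_nonneg_left hpow hc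
  constructor
  · simp only [unu]
    linarith [mul_nonneg hc (Real.rpow_nonneg hν ((γ - 1) / 2))]
  · simp only [unu, uminus]
    linarith

/-- On the fan, the velocity is affine in `ξ` and equals `u_ν` at `ξ = λ₋`. -/
lemma u3_mem_Icc (hγ : 1 < γ) (hν : 0 ≤ ν) (hνρ : ν ≤ ρp)
    (hξ : ξ ∈ Set.Icc (uminus γ ρp θp up) (lamMinus γ ρp θp up ν)) :
    u3 γ ρp θp up ξ ∈ Set.Icc (uminus γ ρp θp up) (unu γ ρp θp up ν) := by
  have hlam : u3 γ ρp θp up (lamMinus γ ρp θp up ν) = unu γ ρp θp up ν := by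
    have : γ - 1 ≠ 0 := by linarith
    have : γ + 1 ≠ 0 := by linarith
    rw [u3, if_pos (lamMinus_le_lamPlus hγ hν hνρ)]
    unfold lamMinus unu
    field_simp
    ring
  rw [← hlam, u3, u3, if_pos (hξ.2.trans (lamMinus_le_lamPlus hγ hν hνρ)),
    if_pos (lamMinus_le_lamPlus hγ hν hνρ)]
  have hγ1 : 0 < γ + 1 := by linarith
  constructor
  · linarith [div_nonneg (mul_nonneg zero_le_two (sub_nonneg.mpr hξ.1)) hγ1.le]
  · gcongr
    exact hξ.2

lemma abs_unu_le (hγ : 1 < γ) (hν : 0 ≤ ν) (hνρ : ν ≤ ρp) :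
    |unu γ ρp θp up ν| ≤ max |uminus γ ρp θp up| |up| :=
  abs_le_max_abs_abs (unu_mem_Icc hγ hν hνρ).1 (unu_mem_Icc hγ hν hνρ).2

lemma abs_m3_le_of_lt_lamMinus (hγ : 1 < γ) (hν : 0 < ν) (hνρ : ν ≤ ρp)
    (hξ : ξ < lamMinus γ ρp θp up ν) :
    |m3 γ ρp θp up ξ| ≤ ν * max |uminus γ ρp θp up| |up| := by
  have hρ := rho3_mem_Icc_of_lt_lamMinus hγ hν hνρ hξ
  rw [m3, abs_mul, abs_of_nonneg hρ.1]
  by_cases hvac : ξ < uminus γ ρp θp up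
  · rw [rho3, if_pos hvac, zero_mul]
    positivity
  · have hu := u3_mem_Icc hγ hν.le hνρ ⟨not_lt.mp hvac, hξ.le⟩
    have hM : |u3 γ ρp θp up ξ| ≤ max |uminus γ ρp θp up| |up| :=
      abs_le_max_abs_abs hu.1 (hu.2.trans (unu_mem_Icc hγ hν.le hνρ).2)
    exact mul_le_mul hρ.2 hM (abs_nonneg _) hν.le

lemma rho3nu_of_lt_lamMinus (hξ : ξ < lamMinus γ ρp θp up ν) :
    rho3nu γ ρp θp up ν ξ = ν := if_pos hξ

lemma u3nu_of_lt_lamMinus (hξ : ξ < lamMinus γ ρp θp up ν) :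
    u3nu γ ρp θp up ν ξ = unu γ ρp θp up ν := if_pos hξ

lemma rho3nu_of_lamMinus_le (hu : uminus γ ρp θp up ≤ ξ) (hξ : lamMinus γ ρp θp up ν ≤ ξ) :
    rho3nu γ ρp θp up ν ξ = rho3 γ ρp θp up ξ := by
  rw [rho3nu, rho3, if_neg (not_lt.mpr hξ), if_neg (not_lt.mpr hu)]
  split_ifs <;> rfl

lemma u3nu_of_lamMinus_le (hξ : lamMinus γ ρp θp up ν ≤ ξ) :
    u3nu γ ρp θp up ν ξ = u3 γ ρp θp up ξ := by
  rw [u3nu, u3, if_neg (not_lt.mpr hξ)]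
  split_ifs <;> rfl

lemma abs_rho3nu_sub_rho3_le (hγ : 1 < γ) (hν : 0 < ν) (hνρ : ν ≤ ρp) (ξ : ℝ) :
    |rho3nu γ ρp θp up ν ξ - rho3 γ ρp θp up ξ| ≤ ν := by
  by_cases hξ : ξ < lamMinus γ ρp θp up ν
  · have hρ := rho3_mem_Icc_of_lt_lamMinus hγ hν hνρ hξ
    rw [rho3nu_of_lt_lamMinus hξ]
    exact abs_sub_le_of_nonneg_of_le hν.le le_rfl hρ.1 hρ.2
  · rw [not_lt] at hξ
    rw [rho3nu_of_lamMinus_le ((uminus_lt_lamMinus hγ hν).le.trans hξ) hξ, sub_self, abs_zero]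
    exact hν.le

lemma abs_m3nu_sub_m3_le (hγ : 1 < γ) (hν : 0 < ν) (hνρ : ν ≤ ρp) (ξ : ℝ) :
    |m3nu γ ρp θp up ν ξ - m3 γ ρp θp up ξ| ≤ 2 * max |uminus γ ρp θp up| |up| * ν := by
  by_cases hξ : ξ < lamMinus γ ρp θp up ν
  · have hm : |m3nu γ ρp θp up ν ξ| ≤ ν * max |uminus γ ρp θp up| |up| := by
      rw [m3nu, rho3nu_of_lt_lamMinus hξ, u3nu_of_lt_lamMinus hξ, abs_mul, abs_of_pos hν]
      exact mul_le_mul_of_nonneg_left (abs_unu_le hγ hν.le hνρ) hν.le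
    linarith [abs_sub (m3nu γ ρp θp up ν ξ) (m3 γ ρp θp up ξ),
      abs_m3_le_of_lt_lamMinus hγ hν hνρ hξ]
  · rw [not_lt] at hξ
    rw [m3nu, m3, rho3nu_of_lamMinus_le ((uminus_lt_lamMinus hγ hν).le.trans hξ) hξ,
      u3nu_of_lamMinus_le hξ, sub_self, abs_zero]
    positivity

lemma abs_n3nu_sub_n3_le (hγ : 1 < γ) (hν : 0 < ν) (hνρ : ν ≤ ρp) (hν1 : ν ≤ 1) (ξ : ℝ) :
    |n3nu γ ρp θp up ν ξ - n3 γ ρp θp up ξ| ≤ Real.exp (Splus γ ρp θp) * ν := by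
  have hE := Real.exp_pos (Splus γ ρp θp)
  have hbound : ∀ x, 0 ≤ x → x ≤ ν →
      x * (Real.exp (Splus γ ρp θp) * x ^ (γ - 1)) ∈ Set.Icc 0 (Real.exp (Splus γ ρp θp) * ν) := by
    intro x hx hxν
    have hpow : x ^ (γ - 1) ≤ 1 := Real.rpow_le_one hx (hxν.trans hν1) (by linarith)
    have hpow0 : 0 ≤ x ^ (γ - 1) := Real.rpow_nonneg hx _
    refine ⟨by positivity, ?_⟩
    calc x * (Real.exp (Splus γ ρp θp) * x ^ (γ - 1))
        ≤ ν * (Real.exp (Splus γ ρp θp) * 1) := by gcongr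
      _ = Real.exp (Splus γ ρp θp) * ν := by ring
  by_cases hξ : ξ < lamMinus γ ρp θp up ν
  · have hρ := rho3_mem_Icc_of_lt_lamMinus hγ hν hνρ hξ
    have hnu := hbound ν hν.le le_rfl
    have hn := hbound _ hρ.1 hρ.2
    rw [n3nu, theta3nu, rho3nu_of_lt_lamMinus hξ]
    exact abs_sub_le_of_nonneg_of_le hnu.1 hnu.2 hn.1 hn.2
  · rw [not_lt] at hξ
    rw [n3nu, n3, theta3nu, theta3,
      rho3nu_of_lamMinus_le ((uminus_lt_lamMinus hγ hν).le.trans hξ) hξ, sub_self, abs_zero]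
    positivity

end CutoffRarefaction

theorem cutoff_rarefaction_convergence_general
    (γ ρp θp up : ℝ) (hγ : 1 < γ) (hρp : 0 < ρp) :
    ∃ ν₀ : ℝ, ν₀ ∈ Set.Ioo (0 : ℝ) 1 ∧ ν₀ < ρp ∧
      ∃ C > (0 : ℝ), ∀ ν ∈ Set.Ioc (0 : ℝ) ν₀,
        (∀ ξ : ℝ, |rho3nu γ ρp θp up ν ξ - rho3 γ ρp θp up ξ| ≤ C * ν) ∧
        (∀ ξ : ℝ, |m3nu γ ρp θp up ν ξ - m3 γ ρp θp up ξ| ≤ C * ν) ∧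
        (∀ ξ : ℝ, |n3nu γ ρp θp up ν ξ - n3 γ ρp θp up ξ| ≤ C * ν) := by
  set M := max |uminus γ ρp θp up| |up|
  set E := Real.exp (Splus γ ρp θp)
  have hM : 0 ≤ M := (abs_nonneg _).trans (le_max_left _ _)
  have hE : 0 < E := Real.exp_pos _
  refine ⟨min (ρp / 2) (1 / 2), ⟨by positivity, by linarith [min_le_right (ρp / 2) (1 / 2)]⟩,
    by linarith [min_le_left (ρp / 2) (1 / 2)], 1 + 2 * M + E, by positivity, ?_⟩
  rintro ν ⟨hν, hν₀⟩
  have hνρ : ν ≤ ρp := by linarith [min_le_left (ρp / 2) (1 / 2)]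
  have hν1 : ν ≤ 1 := by linarith [min_le_right (ρp / 2) (1 / 2)]
  refine ⟨fun ξ => ?_, fun ξ => ?_, fun ξ => ?_⟩
  · exact (abs_rho3nu_sub_rho3_le hγ hν hνρ ξ).trans (by nlinarith)
  · exact (abs_m3nu_sub_m3_le hγ hν hνρ ξ).trans (by nlinarith)
  · exact (abs_n3nu_sub_n3_le hγ hν hνρ hν1 ξ).trans (by nlinarith)

/-- Lemma 2.2: the cut-off 3-rarefaction wave converges to the
3-rarefaction wave with vacuum in the sup-norm at rate ν as ν → 0. -/
theorem cutoff_rarefaction_convergence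
    (γ ρp θp up : ℝ) (hγ : 1 < γ) (hρp : 0 < ρp) (hθp : 0 < θp) :
    ∃ ν₀ : ℝ, ν₀ ∈ Set.Ioo (0 : ℝ) 1 ∧ ν₀ < ρp ∧
      ∃ C > (0 : ℝ), ∀ ν ∈ Set.Ioc (0 : ℝ) ν₀,
        (∀ ξ : ℝ, |rho3nu γ ρp θp up ν ξ - rho3 γ ρp θp up ξ| ≤ C * ν) ∧
        (∀ ξ : ℝ, |m3nu γ ρp θp up ν ξ - m3 γ ρp θp up ξ| ≤ C * ν) ∧
        (∀ ξ : ℝ, |n3nu γ ρp θp up ν ξ - n3 γ ρp θp up ξ| ≤ C * ν) :=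
  cutoff_rarefaction_convergence_general γ ρp θp up hγ hρp
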